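/- Let μ > 0, g(X) = -X^3 + 3μ^2 X, and fix b₁ with 0 ≤ b₁ < 1/μ². As b₂ increases to 2μ - 2 b₁ μ^3 from below (staying in the region where X + b₁ g(X) + b₂ < 0 on (-2μ, -μ]), the integral T₋⁰(b₁,b₂) = ∫_{-2μ}^{-μ} g'(X)/(X + b₁ g(X) + b₂) dX tends to +∞, while T₊⁰(b₁,b₂) = ∫_{2μ}^{μ} g'(X)/(X + b₁ g(X) + b₂) dX remains bounded. -/

import Mathlib

/-!
Since `g X - g (-2μ) = -(X + 2μ) (X - μ)²`, the denominator factors as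
`(X + 2μ) (1 - b₁ (X - μ)²) - ε` with `ε = 2μ - 2b₁μ³ - b₂`. The integrand of `T₋⁰` is
nonnegative, and on `[-2μ, -3μ/2]` the absolute value of the denominator is at most
`8 (X + 2μ) + ε` while `-g' ≥ 15μ²/4`; comparing with
`∫ dX / (8 (X + 2μ) + ε)` bounds `T₋⁰` below by a multiple of `log ((4μ + ε) / ε)`, which tends
to `+∞` as `ε → 0⁺`. On `[μ, 2μ]` the same factorization keeps the denominator above
`μ (1 - b₁μ²) > 0` uniformly in `b₂ ≥ 0`, so `T₊⁰` is bounded.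
-/

open Filter Topology Set Real MeasureTheory

theorem integral_inv_affine {a b c ε : ℝ} (hab : a ≤ b) (hc : 0 < c) (hε : 0 < ε) :
    ∫ x in a..b, (c * (x - a) + ε)⁻¹ = log ((c * (b - a) + ε) / ε) / c := by
  have h := intervalIntegral.integral_comp_mul_add (a := a) (b := b) (fun x : ℝ => x⁻¹) hc.ne'
    (ε - c * a)
  simp only [smul_eq_mul] at h
  rw [show (fun x => (c * (x - a) + ε)⁻¹) = fun x => (c * x + (ε - c * a))⁻¹ by
    funext x; ring_nf, h, integral_inv_of_pos (by linarith) (by nlinarith)]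
  ring_nf

theorem le_integral_div_of_le_affine {f D : ℝ → ℝ} {a b c m ε : ℝ} (hab : a ≤ b) (hc : 0 < c)
    (hε : 0 < ε) (hm : 0 ≤ m) (hfc : ContinuousOn f (Icc a b)) (hDc : ContinuousOn D (Icc a b))
    (hf : ∀ x ∈ Icc a b, m ≤ f x) (hD : ∀ x ∈ Icc a b, 0 < D x)
    (hDle : ∀ x ∈ Icc a b, D x ≤ c * (x - a) + ε) :
    m / c * log ((c * (b - a) + ε) / ε) ≤ ∫ x in a..b, f x / D x := by
  have haff : ∀ x ∈ Icc a b, 0 < c * (x - a) + ε := fun x hx => by nlinarith [hx.1]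
  rw [mul_comm_div, ← integral_inv_affine hab hc hε, ← intervalIntegral.integral_const_mul]
  refine intervalIntegral.integral_mono_on hab ?_ ?_ fun x hx => ?_
  · refine (continuousOn_const.mul (ContinuousOn.inv₀ (by fun_prop) fun x hx => ?_))
      |>.intervalIntegrable
    rw [uIcc_of_le hab] at hx
    exact (haff x hx).ne'
  · refine (hfc.div hDc fun x hx => ?_).intervalIntegrable_of_Icc hab
    exact (hD x hx).ne'
  · calc m * (c * (x - a) + ε)⁻¹ ≤ m / D x := by
          rw [← div_eq_mul_inv]; exact div_le_div_of_nonneg_left hm (hD x hx) (hDle x hx)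
      _ ≤ f x / D x := div_le_div_of_nonneg_right (hf x hx) (hD x hx).le

theorem tendsto_log_add_div_self_nhdsGT_zero {K : ℝ} (hK : 0 < K) :
    Tendsto (fun ε => log ((K + ε) / ε)) (𝓝[>] 0) atTop := by
  refine tendsto_log_atTop.comp ?_
  refine ((tendsto_inv_nhdsGT_zero.const_mul_atTop hK).atTop_add
    (tendsto_const_nhds (x := 1))).congr' ?_
  filter_upwards [self_mem_nhdsWithin] with ε (hε : 0 < ε)
  field_simp

theorem tendsto_const_sub_nhdsLT (B : ℝ) : Tendsto (fun b => B - b) (𝓝[<] B) (𝓝[>] 0) := by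
  refine tendsto_nhdsWithin_iff.mpr ⟨?_, ?_⟩
  · have h : Tendsto (fun b => B - b) (𝓝 B) (𝓝 (B - B)) := tendsto_const_nhds.sub tendsto_id
    rw [sub_self] at h
    exact h.mono_left nhdsWithin_le_nhds
  · filter_upwards [self_mem_nhdsWithin] with b (hb : b < B)
    exact sub_pos.mpr hb

theorem deriv_cubic (μ X : ℝ) : deriv (fun X : ℝ => -X^3 + 3*μ^2*X) X = 3*μ^2 - 3*X^2 := by
  have h := ((hasDerivAt_pow 3 X).neg.add ((hasDerivAt_id X).const_mul (3*μ^2)))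
  convert h.deriv using 1
  · rfl
  · simp only [Nat.cast_ofNat, Nat.add_one_sub_one, mul_one]
    ring

theorem cubic_denominator_eq (μ b₁ b₂ X : ℝ) :
    X + b₁ * (-X^3 + 3*μ^2*X) + b₂
      = (X + 2*μ) * (1 - b₁ * (X - μ)^2) - (2*μ - 2*b₁*μ^3 - b₂) := by
  ring

section Cubic

variable {μ b₁ b₂ : ℝ}

theorem mul_log_le_integral_cubic (hμ : 0 < μ) (hb₁μ : b₁ * μ^2 < 1)
    (hb₂ : b₂ < 2*μ - 2*b₁*μ^3)
    (hneg : ∀ X ∈ Ioc (-2*μ) (-μ), X + b₁ * (-X^3 + 3*μ^2*X) + b₂ < 0) :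
    15*μ^2/32 * log ((4*μ + (2*μ - 2*b₁*μ^3 - b₂)) / (2*μ - 2*b₁*μ^3 - b₂))
      ≤ ∫ X in (-2*μ)..(-μ), (3*μ^2 - 3*X^2) / (X + b₁ * (-X^3 + 3*μ^2*X) + b₂) := by
  set ε := 2*μ - 2*b₁*μ^3 - b₂
  have hε : 0 < ε := sub_pos.mpr hb₂
  have hden : ∀ X ∈ Icc (-2*μ) (-μ), X + b₁ * (-X^3 + 3*μ^2*X) + b₂ < 0 := by
    rintro X ⟨hX₁, hX₂⟩
    rcases hX₁.eq_or_lt with rfl | hX₁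
    · rw [cubic_denominator_eq]; linarith
    · exact hneg X ⟨hX₁, hX₂⟩
  have hden_le : ∀ X ∈ Icc (-2*μ) (-3*μ/2),
      -(X + b₁ * (-X^3 + 3*μ^2*X) + b₂) ≤ 8 * (X - -2*μ) + ε := by
    rintro X ⟨hX₁, hX₂⟩
    have hsq : b₁ * (X - μ)^2 ≤ 9 := by
      rcases le_or_gt 0 b₁ with hb | hb
      · nlinarith [mul_le_mul_of_nonneg_left (show (X - μ)^2 ≤ 9*μ^2 by nlinarith) hb]
      · nlinarith [sq_nonneg (X - μ)]
    rw [cubic_denominator_eq]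
    nlinarith
  calc 15*μ^2/32 * log ((4*μ + ε) / ε)
      = 15*μ^2/4 / 8 * log ((8 * (-3*μ/2 - -2*μ) + ε) / ε) := by ring_nf
    _ ≤ ∫ X in (-2*μ)..(-3*μ/2),
          -(3*μ^2 - 3*X^2) / -(X + b₁ * (-X^3 + 3*μ^2*X) + b₂) :=
        le_integral_div_of_le_affine (by linarith) (by norm_num) hε (by positivity) (by fun_prop)
          (by fun_prop) (fun X hX => by nlinarith [hX.2])
          (fun X hX => neg_pos.mpr (hden X ⟨hX.1, by linarith [hX.2]⟩)) hden_le
    _ = ∫ X in (-2*μ)..(-3*μ/2), (3*μ^2 - 3*X^2) / (X + b₁ * (-X^3 + 3*μ^2*X) + b₂) := by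
        simp_rw [neg_div_neg_eq]
    _ ≤ ∫ X in (-2*μ)..(-μ), (3*μ^2 - 3*X^2) / (X + b₁ * (-X^3 + 3*μ^2*X) + b₂) := by
        refine intervalIntegral.integral_mono_interval le_rfl (by linarith) (by linarith) ?_ ?_
        · refine (ae_restrict_iff' measurableSet_Ioc).mpr (Eventually.of_forall fun X hX => ?_)
          exact div_nonneg_of_nonpos (by nlinarith [hX.1, hX.2])
            (hden X (Ioc_subset_Icc_self hX)).le
        · refine (ContinuousOn.div (by fun_prop) (by fun_prop) fun X hX => (hden X hX).ne)
            |>.intervalIntegrable_of_Icc (by linarith)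

theorem tendsto_integral_cubic_atTop (hμ : 0 < μ) (hb₁μ : b₁ * μ^2 < 1)
    (hneg : ∀ b₂ ∈ Ico 0 (2*μ - 2*b₁*μ^3), ∀ X ∈ Ioc (-2*μ) (-μ),
      X + b₁ * (-X^3 + 3*μ^2*X) + b₂ < 0) :
    Tendsto (fun b₂ => ∫ X in (-2*μ)..(-μ), (3*μ^2 - 3*X^2) / (X + b₁ * (-X^3 + 3*μ^2*X) + b₂))
      (𝓝[Ico 0 (2*μ - 2*b₁*μ^3)] (2*μ - 2*b₁*μ^3)) atTop := by
  set B := 2*μ - 2*b₁*μ^3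
  have hε : Tendsto (fun b₂ => B - b₂) (𝓝[Ico 0 B] B) (𝓝[>] 0) :=
    (tendsto_const_sub_nhdsLT B).mono_left (nhdsWithin_mono _ fun b hb => hb.2)
  refine tendsto_atTop_mono' _ ?_ (((tendsto_log_add_div_self_nhdsGT_zero (K := 4*μ)
    (by positivity)).const_mul_atTop (r := 15*μ^2/32) (by positivity)).comp hε)
  filter_upwards [self_mem_nhdsWithin] with b₂ hb₂
  exact mul_log_le_integral_cubic hμ hb₁μ hb₂.2 (hneg b₂ hb₂)

theorem abs_integral_cubic_le (hμ : 0 < μ) (hb₁ : 0 ≤ b₁) (hb₁μ : b₁ * μ^2 < 1) (hb₂ : 0 ≤ b₂) :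
    |∫ X in (2*μ)..μ, (3*μ^2 - 3*X^2) / (X + b₁ * (-X^3 + 3*μ^2*X) + b₂)|
      ≤ 9*μ^2 / (1 - b₁*μ^2) := by
  have hκ : 0 < 1 - b₁*μ^2 := sub_pos.mpr hb₁μ
  have hbound : ∀ X ∈ uIoc (2*μ) μ,
      ‖(3*μ^2 - 3*X^2) / (X + b₁ * (-X^3 + 3*μ^2*X) + b₂)‖ ≤ 9*μ / (1 - b₁*μ^2) := by
    intro X hX
    rw [uIoc_of_ge (by linarith)] at hX
    obtain ⟨hX₁, hX₂⟩ := hX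
    have hden : μ * (1 - b₁*μ^2) ≤ X + b₁ * (-X^3 + 3*μ^2*X) + b₂ := by
      have hsq : b₁ * (X - μ)^2 ≤ b₁ * μ^2 :=
        mul_le_mul_of_nonneg_left (by nlinarith) hb₁
      rw [cubic_denominator_eq]
      nlinarith
    have hpos : 0 < X + b₁ * (-X^3 + 3*μ^2*X) + b₂ := (by positivity : 0 < μ * _).trans_le hden
    rw [Real.norm_eq_abs, abs_div, abs_of_pos hpos,
      show 9*μ / (1 - b₁*μ^2) = 9*μ^2 / (μ * (1 - b₁*μ^2)) by field_simp]
    exact div_le_div₀ (by positivity) (abs_le.mpr ⟨by nlinarith, by nlinarith⟩) (by positivity) hden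
  calc _ ≤ 9*μ / (1 - b₁*μ^2) * |μ - 2*μ| :=
        intervalIntegral.norm_integral_le_of_norm_le_const hbound
    _ = 9*μ^2 / (1 - b₁*μ^2) := by
        rw [show μ - 2*μ = -μ by ring, abs_neg, abs_of_pos hμ]; field_simp

end Cubic

theorem Tminus_blows_up_Tplus_bounded (μ b₁ : ℝ) (hμ : 0 < μ)
    (hb₁ : 0 ≤ b₁) (hb₁' : b₁ < 1/μ^2)
    (g : ℝ → ℝ) (hg : ∀ X, g X = -X^3 + 3*μ^2*X)
    (hneg : ∀ b₂ ∈ Set.Ico (0:ℝ) (2*μ - 2*b₁*μ^3), ∀ X ∈ Set.Ioc (-2*μ) (-μ),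
      X + b₁ * g X + b₂ < 0) :
    Tendsto (fun b₂ => ∫ X in (-2*μ)..(-μ), deriv g X / (X + b₁ * g X + b₂))
      (nhdsWithin (2*μ - 2*b₁*μ^3) (Set.Ico 0 (2*μ - 2*b₁*μ^3))) atTop ∧
    ∃ M : ℝ, ∀ b₂ ∈ Set.Ico (0:ℝ) (2*μ - 2*b₁*μ^3),
      |∫ X in (2*μ)..μ, deriv g X / (X + b₁ * g X + b₂)| ≤ M := by
  have hb₁μ : b₁ * μ^2 < 1 := (lt_div_iff₀ (by positivity)).mp hb₁'
  have hderiv : deriv g = fun X => 3*μ^2 - 3*X^2 := by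
    rw [funext hg]
    exact funext (deriv_cubic μ)
  simp only [hderiv, hg] at hneg ⊢
  exact ⟨tendsto_integral_cubic_atTop hμ hb₁μ hneg,
    _, fun b₂ hb₂ => abs_integral_cubic_le hμ hb₁ hb₁μ hb₂.1⟩
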